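/- arXiv:1908.10845 — 6 statements merged into one kernel-verified Lean document; each statement's English description precedes it below -/
import Mathlib

section
/- Let G be a graph and let e = x_i x_j be an edge of G. Then the colon ideal (I(G)^{(2)} : e) equals I(G) + (x_p x_q : x_p ∈ N_G(x_i), x_q ∈ N_G(x_j), x_p ≠ x_q) + (x_t : x_t ∈ N_G(x_i) ∩ N_G(x_j)), i.e., the sum of the edge ideal, the ideal generated by all products x_p x_q of a neighbor x_p of x_i and a distinct neighbor x_q of x_j, and the ideal generated by the common neighbors of x_i and x_j. -/
open MvPolynomial

/-- The edge ideal of a graph `G` on vertices `Fin n`, inside `K[x_1,…,x_n]`. -/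
noncomputable def edgeIdeal (K : Type*) [Field K] {n : ℕ} (G : SimpleGraph (Fin n)) :
    Ideal (MvPolynomial (Fin n) K) :=
  Ideal.span {m | ∃ i j : Fin n, G.Adj i j ∧ m = X i * X j}

/-- `C` is a vertex cover of `G`. -/
def IsVertexCover {n : ℕ} (G : SimpleGraph (Fin n)) (C : Set (Fin n)) : Prop :=
  ∀ ⦃i j : Fin n⦄, G.Adj i j → i ∈ C ∨ j ∈ C

/-- `C` is a minimal vertex cover of `G`. -/
def IsMinVertexCover {n : ℕ} (G : SimpleGraph (Fin n)) (C : Set (Fin n)) : Prop :=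
  IsVertexCover G C ∧ ∀ C' ⊆ C, IsVertexCover G C' → C' = C

/-- The monomial prime ideal generated by the variables in `C`. -/
noncomputable def varIdeal (K : Type*) [Field K] {n : ℕ} (C : Set (Fin n)) :
    Ideal (MvPolynomial (Fin n) K) :=
  Ideal.span (X '' C)

/-- The `s`-th symbolic power of the edge ideal of `G`:
the intersection of `p_C ^ s` over all minimal vertex covers `C` of `G`. -/
noncomputable def symbPower (K : Type*) [Field K] {n : ℕ} (G : SimpleGraph (Fin n)) (s : ℕ) :
    Ideal (MvPolynomial (Fin n) K) :=
  ⨅ (C : Set (Fin n)) (_ : IsMinVertexCover G C), varIdeal K C ^ s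

/- ### auxiliary lemmas -/

lemma exists_minCover {n : ℕ} (G : SimpleGraph (Fin n)) (C : Set (Fin n)) (hC : IsVertexCover G C) :
    ∃ C' ⊆ C, IsMinVertexCover G C' := by
  obtain ⟨k, hn⟩ : ∃ k, C.ncard = k := ⟨_, rfl⟩
  induction k using Nat.strong_induction_on generalizing C with
  | _ k ih =>
    by_cases hmin : ∀ C' ⊆ C, IsVertexCover G C' → C' = C
    · exact ⟨C, le_refl _, hC, hmin⟩
    · push_neg at hmin
      obtain ⟨C', hsub, hcov, hne⟩ := hmin
      have hlt : C'.ncard < k := by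
        subst hn
        exact Set.ncard_lt_ncard (ssubset_of_subset_of_ne hsub hne) (Set.toFinite C)
      obtain ⟨C'', h1, h2⟩ := ih _ hlt C' hcov rfl
      exact ⟨C'', h1.trans hsub, h2⟩

lemma X_eq_monomial {n : ℕ} (K : Type*) [Field K] (u : Fin n) :
    (X u : MvPolynomial (Fin n) K) = monomial (Finsupp.single u 1) 1 := by
  rw [← X_pow_eq_monomial, pow_one]

lemma X_mul_X {n : ℕ} (K : Type*) [Field K] (u v : Fin n) :
    (X u : MvPolynomial (Fin n) K) * X v
      = monomial (Finsupp.single u 1 + Finsupp.single v 1) 1 := by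
  rw [X_eq_monomial, X_eq_monomial, monomial_mul, mul_one]

lemma pair_le_iff {n : ℕ} {u v : Fin n} {d : Fin n →₀ ℕ} (huv : u ≠ v) :
    Finsupp.single u 1 + Finsupp.single v 1 ≤ d ↔ 1 ≤ d u ∧ 1 ≤ d v := by
  constructor
  · intro h
    have hu := h u
    have hv := h v
    simp [Finsupp.single_apply, huv, huv.symm] at hu hv
    omega
  · intro ⟨h1, h2⟩ s
    rcases eq_or_ne s u with rfl | hsu
    · simpa [Finsupp.single_apply, huv.symm] using h1
    rcases eq_or_ne s v with rfl | hsv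
    · simpa [Finsupp.single_apply, huv] using h2
    · simp [Finsupp.single_apply, Ne.symm hsu, Ne.symm hsv]

lemma pair_le_iff_self {n : ℕ} {u : Fin n} {d : Fin n →₀ ℕ} :
    Finsupp.single u 1 + Finsupp.single u 1 ≤ d ↔ 2 ≤ d u := by
  rw [← Finsupp.single_add, Finsupp.single_le_iff]

lemma XX_mem (K : Type*) [Field K] {n : ℕ} {C : Set (Fin n)} {w z : Fin n}
    (hw : w ∈ C) (hz : z ∈ C) :
    (X w : MvPolynomial (Fin n) K) * X z ∈ varIdeal K C ^ 2 := by
  rw [sq]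
  exact Ideal.mul_mem_mul (Ideal.subset_span ⟨w, hw, rfl⟩) (Ideal.subset_span ⟨z, hz, rfl⟩)

lemma varIdeal_sq (K : Type*) [Field K] {n : ℕ} (C : Set (Fin n)) :
    varIdeal K C ^ 2 = Ideal.span ((fun s => monomial s (1 : K)) ''
      {d : Fin n →₀ ℕ | ∃ u ∈ C, ∃ v ∈ C, d = Finsupp.single u 1 + Finsupp.single v 1}) := by
  rw [sq, varIdeal, Ideal.span_mul_span']
  congr 1
  ext m
  simp only [Set.mem_mul, Set.mem_image, Set.mem_setOf_eq]
  constructor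
  · rintro ⟨_, ⟨u, hu, rfl⟩, _, ⟨v, hv, rfl⟩, rfl⟩
    exact ⟨_, ⟨u, hu, v, hv, rfl⟩, (X_mul_X K u v).symm⟩
  · rintro ⟨_, ⟨u, hu, v, hv, rfl⟩, rfl⟩
    exact ⟨_, ⟨u, hu, rfl⟩, _, ⟨v, hv, rfl⟩, X_mul_X K u v⟩

lemma rhs_eq (K : Type*) [Field K] {n : ℕ} (G : SimpleGraph (Fin n)) (i j : Fin n) :
    edgeIdeal K G
        + Ideal.span {m | ∃ p q : Fin n, G.Adj i p ∧ G.Adj j q ∧ p ≠ q ∧ m = X p * X q}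
        + Ideal.span {m : MvPolynomial (Fin n) K | ∃ t : Fin n, G.Adj i t ∧ G.Adj j t ∧ m = X t}
      = Ideal.span ((fun s => monomial s (1 : K)) ''
        {d : Fin n →₀ ℕ |
          (∃ p q, G.Adj p q ∧ d = Finsupp.single p 1 + Finsupp.single q 1)
          ∨ (∃ p q, G.Adj i p ∧ G.Adj j q ∧ p ≠ q ∧ d = Finsupp.single p 1 + Finsupp.single q 1)
          ∨ (∃ t, G.Adj i t ∧ G.Adj j t ∧ d = Finsupp.single t 1)}) := by
  rw [edgeIdeal, Submodule.add_eq_sup, Submodule.add_eq_sup, ← Ideal.span_union,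
    ← Ideal.span_union]
  congr 1
  ext m
  simp only [Set.mem_union, Set.mem_setOf_eq, Set.mem_image]
  constructor
  · rintro ((⟨p, q, h, rfl⟩ | ⟨p, q, h1, h2, h3, rfl⟩) | ⟨t, h1, h2, rfl⟩)
    · exact ⟨_, Or.inl ⟨p, q, h, rfl⟩, (X_mul_X K p q).symm⟩
    · exact ⟨_, Or.inr (Or.inl ⟨p, q, h1, h2, h3, rfl⟩), (X_mul_X K p q).symm⟩
    · exact ⟨_, Or.inr (Or.inr ⟨t, h1, h2, rfl⟩), (X_eq_monomial K t).symm⟩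
  · rintro ⟨_, (⟨p, q, h, rfl⟩ | ⟨p, q, h1, h2, h3, rfl⟩ | ⟨t, h1, h2, rfl⟩), rfl⟩
    · exact Or.inl (Or.inl ⟨p, q, h, (X_mul_X K p q).symm⟩)
    · exact Or.inl (Or.inr ⟨p, q, h1, h2, h3, (X_mul_X K p q).symm⟩)
    · exact Or.inr ⟨t, h1, h2, (X_eq_monomial K t).symm⟩


/-- For an edge `e = x_i x_j` of `G`,
`(I(G)^{(2)} : e) = I(G) + (x_p x_q : x_p ∈ N(x_i), x_q ∈ N(x_j), x_p ≠ x_q)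
 + (x_t : x_t ∈ N(x_i) ∩ N(x_j))`. -/
theorem stmt_0 (K : Type*) [Field K] {n : ℕ} (G : SimpleGraph (Fin n))
    (i j : Fin n) (hij : G.Adj i j) :
    (symbPower K G 2).colon ((Ideal.span {X i * X j} : Ideal (MvPolynomial (Fin n) K)) : Set (MvPolynomial (Fin n) K)) =
      edgeIdeal K G
        + Ideal.span {m | ∃ p q : Fin n, G.Adj i p ∧ G.Adj j q ∧ p ≠ q ∧ m = X p * X q}
        + Ideal.span {m | ∃ t : Fin n, G.Adj i t ∧ G.Adj j t ∧ m = X t} := by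
  ext f
  rw [Ideal.mem_colon_span_singleton]
  constructor
  · intro hf
    simp only [symbPower, Ideal.mem_iInf] at hf
    rw [rhs_eq K G i j, mem_ideal_span_monomial_image]
    intro d hd
    by_contra hcon
    push_neg at hcon
    have hcon1 : ∀ p q : Fin n, G.Adj p q →
        ¬(Finsupp.single p 1 + Finsupp.single q 1 ≤ d) :=
      fun p q h hle => hcon _ (Or.inl ⟨p, q, h, rfl⟩) hle
    have hcon2 : ∀ p q : Fin n, G.Adj i p → G.Adj j q → p ≠ q →
        ¬(Finsupp.single p 1 + Finsupp.single q 1 ≤ d) :=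
      fun p q h1 h2 h3 hle => hcon _ (Or.inr (Or.inl ⟨p, q, h1, h2, h3, rfl⟩)) hle
    have hcon3 : ∀ t : Fin n, G.Adj i t → G.Adj j t → ¬(Finsupp.single t 1 ≤ d) :=
      fun t h1 h2 hle => hcon _ (Or.inr (Or.inr ⟨t, h1, h2, rfl⟩)) hle
    -- the support element of `f * (X i * X j)` corresponding to `d`
    have hsupp : d + (Finsupp.single i 1 + Finsupp.single j 1)
        ∈ (f * (X i * X j)).support := by
      rw [mem_support_iff, X_mul_X, coeff_mul_monomial, mul_one]
      exact mem_support_iff.mp hd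
    -- a generic contradiction from a cover avoiding the support of `d` and `z`
    have key : ∀ (z w : Fin n) (C : Set (Fin n)), IsVertexCover G C →
        (∀ s : Fin n, ((d + (Finsupp.single i 1 + Finsupp.single j 1) : Fin n →₀ ℕ)) s
          = d s + (if z = s then 1 else 0) + (if w = s then 1 else 0)) →
        (∀ u ∈ C, d u = 0 ∧ u ≠ z) → False := by
      intro z w C hcov hval hprop
      obtain ⟨C', hsub, hmin⟩ := exists_minCover G C hcov
      have hm := hf C' hmin
      rw [varIdeal_sq, mem_ideal_span_monomial_image] at hm
      obtain ⟨t, ⟨u, hu, v, hv, rfl⟩, hle⟩ := hm _ hsupp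
      obtain ⟨hdu, huz⟩ := hprop u (hsub hu)
      obtain ⟨hdv, hvz⟩ := hprop v (hsub hv)
      rcases eq_or_ne u v with rfl | huv
      · rw [pair_le_iff_self] at hle
        rw [hval u, hdu, if_neg (fun h => huz h.symm)] at hle
        split_ifs at hle <;> omega
      · rw [pair_le_iff huv] at hle
        obtain ⟨h1, h2⟩ := hle
        rw [hval u, hdu, if_neg (fun h => huz h.symm)] at h1
        rw [hval v, hdv, if_neg (fun h => hvz h.symm)] at h2
        have hwu : w = u := by by_contra hc; rw [if_neg hc] at h1; omega
        have hwv : w = v := by by_contra hc; rw [if_neg hc] at h2; omega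
        exact huv (hwu.symm.trans hwv)
    by_cases hi2 : ∃ p, G.Adj i p ∧ d p ≠ 0
    · by_cases hj2 : ∃ q, G.Adj j q ∧ d q ≠ 0
      · obtain ⟨p, hip, hdp⟩ := hi2
        obtain ⟨q, hjq, hdq⟩ := hj2
        rcases eq_or_ne p q with rfl | hpq
        · exact hcon3 p hip hjq (Finsupp.single_le_iff.mpr (by omega))
        · exact hcon2 p q hip hjq hpq ((pair_le_iff hpq).mpr ⟨by omega, by omega⟩)
      · push_neg at hj2
        refine key j i {u | d u = 0 ∧ u ≠ j} ?_ ?_ (fun u hu => hu)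
        · intro u v huv
          by_contra hc
          push_neg at hc
          obtain ⟨hu, hv⟩ := hc
          have hu' : d u ≠ 0 ∨ u = j := by
            by_contra h; push_neg at h; exact hu ⟨h.1, h.2⟩
          have hv' : d v ≠ 0 ∨ v = j := by
            by_contra h; push_neg at h; exact hv ⟨h.1, h.2⟩
          rcases hu' with hu' | rfl
          · rcases hv' with hv' | rfl
            · exact hcon1 u v huv
                ((pair_le_iff (G.ne_of_adj huv)).mpr ⟨by omega, by omega⟩)
            · exact hu' (hj2 u huv.symm)
          · rcases hv' with hv' | rfl
            · exact hv' (hj2 v huv)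
            · exact G.irrefl huv
        · intro s
          simp only [Finsupp.add_apply, Finsupp.single_apply]
          split_ifs <;> omega
    · push_neg at hi2
      refine key i j {u | d u = 0 ∧ u ≠ i} ?_ ?_ (fun u hu => hu)
      · intro u v huv
        by_contra hc
        push_neg at hc
        obtain ⟨hu, hv⟩ := hc
        have hu' : d u ≠ 0 ∨ u = i := by
          by_contra h; push_neg at h; exact hu ⟨h.1, h.2⟩
        have hv' : d v ≠ 0 ∨ v = i := by
          by_contra h; push_neg at h; exact hv ⟨h.1, h.2⟩
        rcases hu' with hu' | rfl
        · rcases hv' with hv' | rfl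
          · exact hcon1 u v huv
              ((pair_le_iff (G.ne_of_adj huv)).mpr ⟨by omega, by omega⟩)
          · exact hu' (hi2 u huv.symm)
        · rcases hv' with hv' | rfl
          · exact hv' (hi2 v huv)
          · exact G.irrefl huv
      · intro s
        simp only [Finsupp.add_apply, Finsupp.single_apply]
        split_ifs <;> omega
  · intro hf
    simp only [symbPower, Ideal.mem_iInf]
    intro C hC
    rw [← Ideal.mem_colon_span_singleton]
    have hle : edgeIdeal K G
        + Ideal.span {m | ∃ p q : Fin n, G.Adj i p ∧ G.Adj j q ∧ p ≠ q ∧ m = X p * X q}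
        + Ideal.span {m : MvPolynomial (Fin n) K | ∃ t : Fin n, G.Adj i t ∧ G.Adj j t ∧ m = X t}
        ≤ (varIdeal K C ^ 2).colon ((Ideal.span {X i * X j} : Ideal (MvPolynomial (Fin n) K)) : Set (MvPolynomial (Fin n) K)) := by
      obtain ⟨hcov, -⟩ := hC
      have hij' := hcov hij
      rw [Submodule.add_eq_sup, Submodule.add_eq_sup]
      refine sup_le (sup_le ?_ ?_) ?_
      · rw [edgeIdeal, Ideal.span_le]
        rintro m ⟨p, q, hpq, rfl⟩
        rw [SetLike.mem_coe, Ideal.mem_colon_span_singleton]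
        rcases hcov hpq with hp | hq <;> rcases hij' with h1 | h1
        · rw [show (X p : MvPolynomial (Fin n) K) * X q * (X i * X j)
              = X q * X j * (X p * X i) by ring]
          exact Ideal.mul_mem_left _ _ (XX_mem K hp h1)
        · rw [show (X p : MvPolynomial (Fin n) K) * X q * (X i * X j)
              = X q * X i * (X p * X j) by ring]
          exact Ideal.mul_mem_left _ _ (XX_mem K hp h1)
        · rw [show (X p : MvPolynomial (Fin n) K) * X q * (X i * X j)
              = X p * X j * (X q * X i) by ring]
          exact Ideal.mul_mem_left _ _ (XX_mem K hq h1)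
        · rw [show (X p : MvPolynomial (Fin n) K) * X q * (X i * X j)
              = X p * X i * (X q * X j) by ring]
          exact Ideal.mul_mem_left _ _ (XX_mem K hq h1)
      · rw [Ideal.span_le]
        rintro m ⟨p, q, hip, hjq, hpq, rfl⟩
        rw [SetLike.mem_coe, Ideal.mem_colon_span_singleton]
        rcases hcov hip with h1 | h1 <;> rcases hcov hjq with h2 | h2
        · exact Ideal.mul_mem_left _ _ (XX_mem K h1 h2)
        · rw [show (X p : MvPolynomial (Fin n) K) * X q * (X i * X j)
              = X p * X j * (X i * X q) by ring]
          exact Ideal.mul_mem_left _ _ (XX_mem K h1 h2)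
        · rw [show (X p : MvPolynomial (Fin n) K) * X q * (X i * X j)
              = X q * X i * (X p * X j) by ring]
          exact Ideal.mul_mem_left _ _ (XX_mem K h1 h2)
        · rw [show (X p : MvPolynomial (Fin n) K) * X q * (X i * X j)
              = X i * X j * (X p * X q) by ring]
          exact Ideal.mul_mem_left _ _ (XX_mem K h1 h2)
      · rw [Ideal.span_le]
        rintro m ⟨t, hit, hjt, rfl⟩
        rw [SetLike.mem_coe, Ideal.mem_colon_span_singleton]
        rcases hcov hit with h1 | h1
        · rcases hcov hjt with h2 | h2
          · exact Ideal.mul_mem_left _ _ (XX_mem K h1 h2)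
          · rw [show (X t : MvPolynomial (Fin n) K) * (X i * X j)
                = X j * (X t * X i) by ring]
            exact Ideal.mul_mem_left _ _ (XX_mem K h2 h1)
        · rcases hij' with h2 | h2
          · rw [show (X t : MvPolynomial (Fin n) K) * (X i * X j)
                = X j * (X t * X i) by ring]
            exact Ideal.mul_mem_left _ _ (XX_mem K h1 h2)
          · rw [show (X t : MvPolynomial (Fin n) K) * (X i * X j)
                = X i * (X t * X j) by ring]
            exact Ideal.mul_mem_left _ _ (XX_mem K h1 h2)
    exact hle hf
end

section
/- Let G be a graph, s ≥ 1 an integer, and let e_{i_1}, …, e_{i_s} be edges of G (repetitions allowed) with u = e_{i_1}⋯e_{i_s} the product of the corresponding quadratic monomials. Then (I(G)^{(s+1)} : u) = ((I(G)^{(2)} : e_{i_1})^{(s)} : e_{i_2}⋯e_{i_s}), where J^{(s)} denotes the s-th symbolic power of the squarefree monomial ideal J = (I(G)^{(2)} : e_{i_1}), namely the intersection of the s-th powers of the minimal primes of J. -/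
open MvPolynomial

/-- The `s`-th symbolic power of an arbitrary ideal `J`:
the intersection of the `s`-th powers of the minimal primes of `J`. -/
noncomputable def symbPowerIdeal {K : Type*} [Field K] {n : ℕ}
    (J : Ideal (MvPolynomial (Fin n) K)) (s : ℕ) : Ideal (MvPolynomial (Fin n) K) :=
  ⨅ p ∈ J.minimalPrimes, p ^ s

section Aux

open Finset

variable {K : Type*} [Field K] {n : ℕ}

/-- The total degree of the exponent `d` in the variables belonging to `C`. -/
noncomputable def wC (C : Set (Fin n)) (d : Fin n →₀ ℕ) : ℕ :=
  ∑ i : Fin n, C.indicator d i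

lemma wC_add (C : Set (Fin n)) (d e : Fin n →₀ ℕ) : wC C (d + e) = wC C d + wC C e := by
  simp only [wC, Finsupp.coe_add, ← Finset.sum_add_distrib]
  refine Finset.sum_congr rfl fun i _ => ?_
  by_cases h : i ∈ C <;> simp [Set.indicator, h]

lemma wC_sum {ι : Type*} (C : Set (Fin n)) (t : Finset ι) (d : ι → (Fin n →₀ ℕ)) :
    wC C (∑ k ∈ t, d k) = ∑ k ∈ t, wC C (d k) := by
  induction t using Finset.cons_induction with
  | empty => simp [wC]
  | cons i t hi ih => rw [Finset.sum_cons, Finset.sum_cons, wC_add, ih]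

lemma wC_single (C : Set (Fin n)) (i : Fin n) :
    wC C (Finsupp.single i 1) = C.indicator (fun _ => 1) i := by
  classical
  rw [wC, Finset.sum_eq_single i]
  · by_cases h : i ∈ C <;> simp [Set.indicator, h]
  · intro j _ hj
    by_cases h : j ∈ C <;> simp [Set.indicator, h, Finsupp.single_apply, Ne.symm hj]
  · simp

lemma wC_single_mem (C : Set (Fin n)) {i : Fin n} (h : i ∈ C) :
    wC C (Finsupp.single i 1) = 1 := by simp [wC_single, Set.indicator, h]

lemma wC_single_le (C : Set (Fin n)) (i : Fin n) :
    wC C (Finsupp.single i 1) ≤ 1 := by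
  by_cases h : i ∈ C <;> simp [wC_single, Set.indicator, h]

lemma wC_mono (C : Set (Fin n)) {d e : Fin n →₀ ℕ} (h : d ≤ e) : wC C d ≤ wC C e := by
  refine Finset.sum_le_sum fun i _ => ?_
  by_cases hi : i ∈ C <;> simp [Set.indicator, hi, h i]

lemma wC_mono_set {C C' : Set (Fin n)} (h : C ⊆ C') (d : Fin n →₀ ℕ) :
    wC C d ≤ wC C' d := by
  refine Finset.sum_le_sum fun i _ => ?_
  by_cases hi : i ∈ C
  · simp [Set.indicator, hi, h hi]
  · simp [Set.indicator, hi]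

lemma wC_pos_elim {C : Set (Fin n)} {d : Fin n →₀ ℕ} (h : 1 ≤ wC C d) :
    ∃ i ∈ C, d i ≠ 0 := by
  have : ∃ i ∈ Finset.univ, C.indicator d i ≠ 0 := by
    by_contra hc
    push_neg at hc
    have : wC C d = 0 := Finset.sum_eq_zero fun i hi => hc i hi
    omega
  obtain ⟨i, _, hi⟩ := this
  by_cases hiC : i ∈ C
  · exact ⟨i, hiC, by simpa [Set.indicator, hiC] using hi⟩
  · simp [Set.indicator, hiC] at hi

lemma monomial_mem_varIdeal_pow {C : Set (Fin n)} {m : ℕ} :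
    ∀ d : Fin n →₀ ℕ, m ≤ wC C d → ∀ c : K, monomial d c ∈ (varIdeal K C) ^ m := by
  induction m with
  | zero => intro d _ c; simp
  | succ m ih =>
    intro d hd c
    obtain ⟨i, hiC, hdi⟩ := wC_pos_elim (le_trans (Nat.le_add_left 1 m) hd)
    have hle : Finsupp.single i 1 ≤ d := by
      rw [Finsupp.single_le_iff]
      omega
    have hsum : d - Finsupp.single i 1 + Finsupp.single i 1 = d := tsub_add_cancel_of_le hle
    have hw : wC C (d - Finsupp.single i 1) + 1 = wC C d := by
      have h2 := wC_add C (d - Finsupp.single i 1) (Finsupp.single i 1)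
      rw [hsum, wC_single_mem C hiC] at h2
      omega
    have hmem : monomial d c =
        monomial (d - Finsupp.single i 1) c * X i := by
      rw [X, monomial_mul, mul_one, hsum]
    rw [hmem, pow_succ]
    exact Ideal.mul_mem_mul (ih _ (by omega) c)
      (Ideal.subset_span ⟨i, hiC, rfl⟩)

lemma varIdeal_pow_le (C : Set (Fin n)) (m : ℕ) :
    (varIdeal K C) ^ m ≤
      Ideal.span ((fun d => monomial d (1 : K)) '' {d | m ≤ wC C d}) := by
  induction m with
  | zero =>
    rw [pow_zero, Ideal.one_eq_top, top_le_iff, Ideal.eq_top_iff_one]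
    exact Ideal.subset_span ⟨0, by simp, by simp⟩
  | succ m ih =>
    rw [pow_succ]
    have h1 : varIdeal K C ≤
        Ideal.span ((fun d => monomial d (1 : K)) '' {d | 1 ≤ wC C d}) := by
      rw [varIdeal, Ideal.span_le]
      rintro _ ⟨i, hi, rfl⟩
      exact Ideal.subset_span ⟨Finsupp.single i 1, by simp [wC_single_mem C hi], rfl⟩
    refine le_trans (Ideal.mul_mono ih h1) ?_
    rw [Ideal.span_mul_span']
    rw [Ideal.span_le]
    rintro _ ⟨_, ⟨d, hd, rfl⟩, _, ⟨e, he, rfl⟩, rfl⟩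
    refine Ideal.subset_span ⟨d + e, ?_, by simp [monomial_mul]⟩
    have := wC_add C d e
    simp only [Set.mem_setOf_eq] at hd he ⊢
    omega

lemma mem_varIdeal_pow {C : Set (Fin n)} {m : ℕ} {f : MvPolynomial (Fin n) K} :
    f ∈ (varIdeal K C) ^ m ↔ ∀ d ∈ f.support, m ≤ wC C d := by
  constructor
  · intro hf d hd
    have := varIdeal_pow_le C m hf
    rw [mem_ideal_span_monomial_image] at this
    obtain ⟨d', hd', hle⟩ := this d hd
    exact le_trans hd' (wC_mono C hle)
  · intro h
    have : f = ∑ d ∈ f.support, monomial d (coeff d f) := (support_sum_monomial_coeff f).symm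
    rw [this]
    exact Ideal.sum_mem _ fun d hd => monomial_mem_varIdeal_pow d (h d hd) _

open Classical in
/-- The algebra map sending the variables in `C` to `0` and fixing the others. -/
noncomputable def phiC (K : Type*) [Field K] {n : ℕ} (C : Set (Fin n)) :
    MvPolynomial (Fin n) K →ₐ[K] MvPolynomial (Fin n) K :=
  aeval (fun i => if i ∈ C then 0 else X i)

lemma sub_phiC_mem (C : Set (Fin n)) (f : MvPolynomial (Fin n) K) :
    f - phiC K C f ∈ varIdeal K C := by
  classical
  induction f using MvPolynomial.induction_on with
  | C c => simp [phiC, varIdeal]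
  | add f g hf hg =>
    have : f + g - phiC K C (f + g) = (f - phiC K C f) + (g - phiC K C g) := by
      rw [map_add]; ring
    rw [this]; exact Ideal.add_mem _ hf hg
  | mul_X f i hf =>
    rw [map_mul]
    by_cases hi : i ∈ C
    · have hXi : (X i : MvPolynomial (Fin n) K) ∈ varIdeal K C :=
        Ideal.subset_span ⟨i, hi, rfl⟩
      have : phiC K C (X i) = 0 := by simp [phiC, hi]
      rw [this, mul_zero, sub_zero]
      exact Ideal.mul_mem_left _ _ hXi
    · have : phiC K C (X i) = X i := by simp [phiC, hi]
      rw [this]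
      have : f * X i - phiC K C f * X i = (f - phiC K C f) * X i := by ring
      rw [this]
      exact Ideal.mul_mem_right _ _ hf

lemma varIdeal_eq_ker (C : Set (Fin n)) :
    varIdeal K C = RingHom.ker (phiC K C).toRingHom := by
  classical
  apply le_antisymm
  · rw [varIdeal, Ideal.span_le]
    rintro _ ⟨i, hi, rfl⟩
    simp [RingHom.mem_ker, phiC, hi]
  · intro f hf
    rw [RingHom.mem_ker] at hf
    have h2 : (phiC K C) f = 0 := hf
    have := sub_phiC_mem C f
    rwa [h2, sub_zero] at this

instance varIdeal_isPrime (C : Set (Fin n)) : (varIdeal K C).IsPrime := by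
  rw [varIdeal_eq_ker]
  exact RingHom.ker_isPrime _

lemma varIdeal_le_varIdeal_iff {C C' : Set (Fin n)} :
    varIdeal K C ≤ varIdeal K C' ↔ C ⊆ C' := by
  constructor
  · intro h i hi
    have hX : (X i : MvPolynomial (Fin n) K) ∈ varIdeal K C' :=
      h (Ideal.subset_span ⟨i, hi, rfl⟩)
    rw [varIdeal, mem_ideal_span_X_image] at hX
    obtain ⟨j, hj, hne⟩ := hX (Finsupp.single i 1) (by simp [support_X])
    rcases eq_or_ne j i with rfl | hji
    · exact hj
    · simp [Finsupp.single_apply, (Ne.symm hji : i ≠ j)] at hne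
  · intro h
    exact Ideal.span_mono (Set.image_mono h)

lemma varIdeal_colon_pow (C : Set (Fin n)) (m : ℕ) (e : Fin n →₀ ℕ) :
    ((varIdeal K C) ^ m).colon (Ideal.span {monomial e (1 : K)}) =
      (varIdeal K C) ^ (m - wC C e) := by
  ext g
  rw [Ideal.mem_colon_span_singleton, mem_varIdeal_pow, mem_varIdeal_pow]
  constructor
  · intro h d' hd'
    have hmem : d' + e ∈ (g * monomial e (1 : K)).support := by
      rw [mem_support_iff, coeff_mul_monomial', if_pos le_add_self, add_tsub_cancel_right,
        mul_one]
      rwa [mem_support_iff] at hd'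
    have := h _ hmem
    rw [wC_add] at this
    omega
  · intro h d hd
    rw [mem_support_iff, coeff_mul_monomial'] at hd
    split_ifs at hd with hle
    · rw [mul_one] at hd
      have hd' : d - e ∈ g.support := mem_support_iff.mpr hd
      have h1 := h _ hd'
      have h2 := wC_add C (d - e) e
      rw [tsub_add_cancel_of_le hle] at h2
      omega
    · exact absurd rfl hd

lemma exists_min_below {F : Set (Set (Fin n))} {C : Set (Fin n)} (hC : C ∈ F) :
    ∃ D ∈ F, D ⊆ C ∧ ∀ C' ∈ F, C' ⊆ D → C' = D := by
  obtain ⟨D, hD, hmin⟩ := Set.Finite.exists_minimal (s := {D ∈ F | D ⊆ C})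
    (Set.toFinite _) ⟨C, hC, subset_rfl⟩
  refine ⟨D, hD.1, hD.2, fun C' hC' hsub => ?_⟩
  exact Set.Subset.antisymm hsub (hmin ⟨hC', hsub.trans hD.2⟩ hsub)

lemma prime_le_of_biInf_le {F : Set (Set (Fin n))} {q : Ideal (MvPolynomial (Fin n) K)}
    (hq : q.IsPrime) (h : (⨅ C ∈ F, varIdeal K C) ≤ q) :
    ∃ C ∈ F, varIdeal K C ≤ q := by
  have hF : F.Finite := Set.toFinite F
  have heq : (⨅ C ∈ F, varIdeal K C) = hF.toFinset.inf (fun C => varIdeal K C) := by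
    rw [Finset.inf_eq_iInf]
    exact iInf_congr fun C => by rw [Set.Finite.mem_toFinset]
  rw [heq, hq.inf_le'] at h
  obtain ⟨C, hC, hle⟩ := h
  exact ⟨C, hF.mem_toFinset.mp hC, hle⟩

lemma minimalPrimes_biInf_varIdeal (F : Set (Set (Fin n))) :
    (⨅ C ∈ F, varIdeal K C).minimalPrimes =
      varIdeal K '' {C | C ∈ F ∧ ∀ C' ∈ F, C' ⊆ C → C' = C} := by
  ext p
  constructor
  · rintro ⟨⟨hp, hJp⟩, hmin⟩
    obtain ⟨C, hCF, hCp⟩ := prime_le_of_biInf_le hp hJp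
    obtain ⟨D, hDF, hDC, hDmin⟩ := exists_min_below hCF
    have hDp : varIdeal K D ≤ p :=
      le_trans (varIdeal_le_varIdeal_iff.mpr hDC) hCp
    have hJD : (⨅ C ∈ F, varIdeal K C) ≤ varIdeal K D := biInf_le _ hDF
    have hpD : p ≤ varIdeal K D := hmin ⟨varIdeal_isPrime D, hJD⟩ hDp
    exact ⟨D, ⟨hDF, hDmin⟩, (le_antisymm hDp hpD)⟩
  · rintro ⟨D, ⟨hDF, hDmin⟩, rfl⟩
    refine ⟨⟨varIdeal_isPrime D, biInf_le _ hDF⟩, ?_⟩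
    rintro q ⟨hq, hJq⟩ hqD
    obtain ⟨C, hCF, hCq⟩ := prime_le_of_biInf_le hq hJq
    have hCD : C ⊆ D := varIdeal_le_varIdeal_iff.mp (hCq.trans hqD)
    rw [hDmin C hCF hCD] at hCq
    exact hCq

lemma prod_monomial_one {ι : Type*} (s : Finset ι) (d : ι → (Fin n →₀ ℕ)) :
    ∏ k ∈ s, (monomial (d k) (1 : K)) = monomial (∑ k ∈ s, d k) 1 := by
  induction s using Finset.cons_induction with
  | empty => simp
  | cons i s hi ih => rw [Finset.prod_cons, Finset.sum_cons, ih, monomial_mul, one_mul]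

lemma prod_X_mul_X {ι : Type*} (s : Finset ι) (a b : ι → Fin n) :
    ∏ k ∈ s, (X (a k) * X (b k) : MvPolynomial (Fin n) K) =
      monomial (∑ k ∈ s, (Finsupp.single (a k) 1 + Finsupp.single (b k) 1)) 1 := by
  rw [← prod_monomial_one]
  refine Finset.prod_congr rfl fun k _ => ?_
  rw [X, X, monomial_mul, one_mul]

lemma colon_symbPower (G : SimpleGraph (Fin n)) (m : ℕ) (e : Fin n →₀ ℕ) :
    (symbPower K G m).colon (Ideal.span {monomial e (1 : K)}) =
      ⨅ (C : Set (Fin n)) (_ : IsMinVertexCover G C), (varIdeal K C) ^ (m - wC C e) := by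
  ext g
  rw [Ideal.mem_colon_span_singleton]
  simp only [symbPower, Ideal.mem_iInf]
  refine forall_congr' fun C => forall_congr' fun hC => ?_
  rw [← Ideal.mem_colon_span_singleton, varIdeal_colon_pow]

end Aux

/-- For edges `e_{i_1}, …, e_{i_s}` of `G` (repetitions allowed), with
`u = e_{i_1} ⋯ e_{i_s}`, one has
`(I(G)^{(s+1)} : u) = ((I(G)^{(2)} : e_{i_1})^{(s)} : e_{i_2} ⋯ e_{i_s})`,
where the outer symbolic power of the squarefree monomial ideal `(I(G)^{(2)} : e_{i_1})`
is the intersection of the `s`-th powers of its minimal primes. -/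
theorem stmt_2 (K : Type*) [Field K] {n : ℕ} (G : SimpleGraph (Fin n))
    (s : ℕ) (hs : 1 ≤ s) (a b : Fin s → Fin n) (hab : ∀ k, G.Adj (a k) (b k)) :
    (symbPower K G (s + 1)).colon ((Ideal.span {∏ k, X (a k) * X (b k)} :
      Ideal (MvPolynomial (Fin n) K)) : Set (MvPolynomial (Fin n) K)) =
      (symbPowerIdeal
          ((symbPower K G 2).colon
            ((Ideal.span {X (a ⟨0, hs⟩) * X (b ⟨0, hs⟩)} :
              Ideal (MvPolynomial (Fin n) K)) : Set (MvPolynomial (Fin n) K))) s).colon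
        ((Ideal.span {∏ k ∈ Finset.univ.erase ⟨0, hs⟩, X (a k) * X (b k)} :
          Ideal (MvPolynomial (Fin n) K)) : Set (MvPolynomial (Fin n) K)) := by
  classical
  set k0 : Fin s := ⟨0, hs⟩ with hk0
  set ed : Fin s → (Fin n →₀ ℕ) :=
    fun k => Finsupp.single (a k) 1 + Finsupp.single (b k) 1 with hed
  set e1 : Fin n →₀ ℕ := ed k0 with he1def
  set rest : Fin n →₀ ℕ := ∑ k ∈ Finset.univ.erase k0, ed k with hrestdef
  -- rewrite the three products of variables as single monomials
  have hu : (∏ k, (X (a k) * X (b k)) : MvPolynomial (Fin n) K) =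
      monomial (e1 + rest) 1 := by
    rw [prod_X_mul_X]
    simp only [he1def, hrestdef, hed]
    rw [← Finset.add_sum_erase Finset.univ
      (fun k => Finsupp.single (a k) 1 + Finsupp.single (b k) 1) (Finset.mem_univ k0)]
  have hrest : (∏ k ∈ Finset.univ.erase k0, (X (a k) * X (b k)) : MvPolynomial (Fin n) K) =
      monomial rest 1 := by
    rw [prod_X_mul_X]
  have he1 : (X (a k0) * X (b k0) : MvPolynomial (Fin n) K) = monomial e1 1 := by
    simp only [he1def, hed]
    rw [X, X, monomial_mul, one_mul]
  rw [hu, hrest, he1]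
  -- weight bounds for edges
  have hedge_low : ∀ (C : Set (Fin n)), IsVertexCover G C → ∀ k, 1 ≤ wC C (ed k) := by
    intro C hC k
    simp only [hed]
    have hadd := wC_add C (Finsupp.single (a k) 1) (Finsupp.single (b k) 1)
    rcases hC (hab k) with h | h
    · have h1 := wC_single_mem C h; omega
    · have h1 := wC_single_mem C h; omega
  have hedge_up : ∀ (C : Set (Fin n)) (k : Fin s), wC C (ed k) ≤ 2 := by
    intro C k
    simp only [hed]
    have hadd := wC_add C (Finsupp.single (a k) 1) (Finsupp.single (b k) 1)
    have h1 := wC_single_le C (a k)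
    have h2 := wC_single_le C (b k)
    omega
  -- the family F of minimal vertex covers containing exactly one endpoint of e1
  set F : Set (Set (Fin n)) :=
    {C | IsMinVertexCover G C ∧ wC C e1 = 1} with hF
  -- the inner colon ideal equals the intersection of the p_C for C in F
  have hJ : (symbPower K G 2).colon (Ideal.span {monomial e1 (1 : K)}) =
      ⨅ C ∈ F, varIdeal K C := by
    rw [colon_symbPower]
    apply le_antisymm
    · refine le_iInf fun C => le_iInf fun hC => ?_
      refine le_trans (iInf₂_le C hC.1) ?_
      rw [hC.2]
      norm_num
    · refine le_iInf fun C => le_iInf fun hC => ?_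
      by_cases h1 : wC C e1 = 1
      · refine le_trans (iInf₂_le C ⟨hC, h1⟩) ?_
        rw [h1]
        norm_num
      · have h2 : wC C e1 = 2 := by
          have := hedge_low C hC.1 k0
          have := hedge_up C k0
          rw [← he1def] at *
          omega
        rw [h2]
        simp
  rw [hJ]
  -- rewrite both sides as intersections over covers
  have hRHS : (symbPowerIdeal (⨅ C ∈ F, varIdeal K C) s).colon
      (Ideal.span {monomial rest (1 : K)}) =
      ⨅ C ∈ {C | C ∈ F ∧ ∀ C' ∈ F, C' ⊆ C → C' = C},
        (varIdeal K C) ^ (s - wC C rest) := by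
    rw [symbPowerIdeal, minimalPrimes_biInf_varIdeal, iInf_image]
    ext g
    rw [Ideal.mem_colon_span_singleton]
    simp only [Ideal.mem_iInf]
    refine forall_congr' fun C => forall_congr' fun hC => ?_
    rw [← Ideal.mem_colon_span_singleton, varIdeal_colon_pow]
  rw [hRHS, colon_symbPower]
  -- final comparison of the two intersections
  apply le_antisymm
  · refine le_iInf fun C => le_iInf fun hC => ?_
    have hmc : IsMinVertexCover G C := hC.1.1
    have h1 : wC C e1 = 1 := hC.1.2
    have hexp : s + 1 - wC C (e1 + rest) = s - wC C rest := by
      rw [wC_add, h1]; omega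
    refine le_trans (iInf₂_le C hmc) ?_
    rw [hexp]
  · refine le_iInf fun C => le_iInf fun hmc => ?_
    by_cases h1 : wC C e1 = 1
    · obtain ⟨D, hDF, hDC, hDmin⟩ := exists_min_below (F := F) ⟨hmc, h1⟩
      refine le_trans (iInf₂_le D ⟨hDF, hDmin⟩) ?_
      have hexp : s + 1 - wC C (e1 + rest) = s - wC C rest := by
        rw [wC_add, h1]; omega
      rw [hexp]
      have hw : wC D rest ≤ wC C rest := wC_mono_set hDC rest
      calc (varIdeal K D) ^ (s - wC D rest)
          ≤ (varIdeal K D) ^ (s - wC C rest) :=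
            Ideal.pow_le_pow_right (by omega)
        _ ≤ (varIdeal K C) ^ (s - wC C rest) :=
            Ideal.pow_right_mono (varIdeal_le_varIdeal_iff.mpr hDC) _
    · have h2 : wC C e1 = 2 := by
        have := hedge_low C hmc.1 k0
        have := hedge_up C k0
        rw [← he1def] at *
        omega
      have hrest_ge : s - 1 ≤ wC C rest := by
        rw [hrestdef, wC_sum]
        calc s - 1 = ∑ _k ∈ Finset.univ.erase k0, 1 := by
              rw [Finset.sum_const, smul_eq_mul, mul_one,
                Finset.card_erase_of_mem (Finset.mem_univ k0), Finset.card_univ,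
                Fintype.card_fin]
          _ ≤ _ := Finset.sum_le_sum fun k hk => hedge_low C hmc.1 k
      have hexp : s + 1 - wC C (e1 + rest) = 0 := by
        rw [wC_add, h2]; omega
      rw [hexp, pow_zero, Ideal.one_eq_top]
      exact le_top
end

section
/- For every graph G, the third symbolic power of the edge ideal is contained in the square of the edge ideal: I(G)^{(3)} ⊆ I(G)^2. -/
open MvPolynomial

/-- Powers of the variable ideal are monomial ideals with explicit generators. -/
lemma varIdeal_pow_eq (K : Type*) [Field K] {n : ℕ} (C : Set (Fin n)) (s : ℕ) :
    varIdeal K C ^ s =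
      Ideal.span ((fun t => monomial t (1 : K)) ''
        {t : Fin n →₀ ℕ | ↑t.support ⊆ C ∧ (t.sum fun _ e => e) = s}) := by
  induction s with
  | zero =>
    have hset : {t : Fin n →₀ ℕ | ↑t.support ⊆ C ∧ (t.sum fun _ e => e) = 0} = {0} := by
      ext t
      constructor
      · rintro ⟨-, hsum⟩
        have : ∀ i ∈ t.support, t i = 0 := by
          intro i hi
          by_contra h
          have h1 : 1 ≤ t i := Nat.one_le_iff_ne_zero.2 h
          have : 1 ≤ t.sum fun _ e => e := le_trans h1 (Finset.single_le_sum (f := fun i => t i) (fun _ _ => Nat.zero_le _) hi)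
          omega
        have : t = 0 := by
          ext i
          by_cases hi : i ∈ t.support
          · exact this i hi
          · simpa using Finsupp.notMem_support_iff.mp hi
        simpa using this
      · rintro rfl
        exact ⟨by simp, by simp⟩
    rw [pow_zero, hset]
    simp [Ideal.one_eq_top, Ideal.span_singleton_one]
  | succ s ih =>
    rw [pow_succ, ih, varIdeal, Ideal.span_mul_span']
    apply le_antisymm
    · rw [Ideal.span_le]
      rintro x ⟨a, ⟨t, ⟨htC, hts⟩, rfl⟩, b, ⟨i, hiC, rfl⟩, rfl⟩
      apply Ideal.subset_span
      refine ⟨t + Finsupp.single i 1, ⟨?_, ?_⟩, ?_⟩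
      · intro j hj
        rcases Finset.mem_union.mp (Finsupp.support_add hj) with h | h
        · exact htC h
        · have : j = i := by
            have := Finsupp.support_single_subset h
            simpa using this
          exact this ▸ hiC
      · rw [Finsupp.sum_add_index' (fun _ => rfl) (fun _ _ _ => rfl), hts,
          Finsupp.sum_single_index rfl]
      · show _ = monomial t 1 * X i
        rw [X, monomial_mul, mul_one]
    · rw [Ideal.span_le]
      rintro x ⟨t, ⟨htC, hts⟩, rfl⟩
      have hne : t.support.Nonempty := by
        by_contra h
        rw [Finset.not_nonempty_iff_eq_empty] at h
        rw [Finsupp.sum, h] at hts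
        simp at hts
      obtain ⟨i, hi⟩ := hne
      have hile : Finsupp.single i 1 ≤ t :=
        Finsupp.single_le_iff.2 (Nat.one_le_iff_ne_zero.2 (Finsupp.mem_support_iff.mp hi))
      have hrec : (t - Finsupp.single i 1) + Finsupp.single i 1 = t :=
        tsub_add_cancel_of_le hile
      have hmem : (t - Finsupp.single i 1) ∈
          {t : Fin n →₀ ℕ | ↑t.support ⊆ C ∧ (t.sum fun _ e => e) = s} := by
        constructor
        · exact fun j hj => htC (Finsupp.support_tsub hj)
        · have := congrArg (fun u : Fin n →₀ ℕ => u.sum fun _ e => e) hrec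
          rw [Finsupp.sum_add_index' (fun _ => rfl) (fun _ _ _ => rfl),
            Finsupp.sum_single_index rfl, hts] at this
          omega
      apply Ideal.subset_span
      refine ⟨monomial (t - Finsupp.single i 1) 1, ⟨_, hmem, rfl⟩, X i, ⟨i, htC hi, rfl⟩, ?_⟩
      show monomial (t - Finsupp.single i 1) 1 * X i = monomial t 1
      rw [X, monomial_mul, mul_one, hrec]

/-- Every vertex cover contains a minimal vertex cover. -/
lemma exists_min_cover {n : ℕ} (G : SimpleGraph (Fin n)) :
    ∀ (N : ℕ) (C : Set (Fin n)), C.ncard ≤ N → IsVertexCover G C →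
      ∃ C' ⊆ C, IsMinVertexCover G C' := by
  intro N
  induction N with
  | zero =>
    intro C hcard hC
    have hCe : C = ∅ := (Set.ncard_eq_zero (Set.toFinite C)).1 (Nat.le_zero.1 hcard)
    refine ⟨C, le_refl _, hC, fun C' hsub _ => ?_⟩
    rw [hCe] at hsub ⊢
    exact Set.subset_empty_iff.mp hsub
  | succ N ih =>
    intro C hcard hC
    by_cases hmin : ∀ C' ⊆ C, IsVertexCover G C' → C' = C
    · exact ⟨C, le_refl _, hC, hmin⟩
    · push_neg at hmin
      obtain ⟨C', hsub, hcov, hne⟩ := hmin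
      have hlt : C' ⊂ C := hsub.ssubset_of_ne hne
      have hlt' : C'.ncard < C.ncard := Set.ncard_lt_ncard hlt (Set.toFinite C)
      obtain ⟨C'', h1, h2⟩ := ih C' (by omega) hcov
      exact ⟨C'', h1.trans hsub, h2⟩


/-- A helper: two variables with positive exponents, at adjacent (hence distinct) vertices,
give a divisibility of single-sums. -/
lemma pair_le {n : ℕ} {k l : Fin n} (hkl : k ≠ l) {d : Fin n →₀ ℕ}
    (hk : d k ≠ 0) (hl : d l ≠ 0) :
    Finsupp.single k 1 + Finsupp.single l 1 ≤ d := by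
  intro i
  simp only [Finsupp.coe_add, Pi.add_apply, Finsupp.single_apply]
  by_cases hik : i = k
  · subst hik
    rw [if_pos rfl, if_neg (by exact fun h => hkl h.symm)]
    omega
  · rw [if_neg (fun h => hik h.symm)]
    by_cases hil : i = l
    · subst hil; rw [if_pos rfl]; omega
    · rw [if_neg (fun h => hil h.symm)]; omega

/-- The combinatorial heart: if the exponent vector `m` has weight `≥ 3` on every
minimal vertex cover, then the product of two edges divides the monomial `m`. -/
lemma key_lemma {n : ℕ} (G : SimpleGraph (Fin n)) (m : Fin n →₀ ℕ)
    (h : ∀ C : Set (Fin n), IsMinVertexCover G C →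
      ∃ t : Fin n →₀ ℕ, ↑t.support ⊆ C ∧ (t.sum fun _ e => e) = 3 ∧ t ≤ m) :
    ∃ i j k l : Fin n, G.Adj i j ∧ G.Adj k l ∧
      Finsupp.single i 1 + Finsupp.single j 1 + Finsupp.single k 1 + Finsupp.single l 1 ≤ m := by
  by_contra hno
  push_neg at hno
  by_cases hedge : ∃ u v : Fin n, G.Adj u v ∧ m u ≠ 0 ∧ m v ≠ 0
  · obtain ⟨u, v, huv, hu, hv⟩ := hedge
    set e : Fin n →₀ ℕ := Finsupp.single u 1 + Finsupp.single v 1 with he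
    have hle : e ≤ m := pair_le huv.ne hu hv
    set d : Fin n →₀ ℕ := m - e with hd
    have hde : d + e = m := tsub_add_cancel_of_le hle
    -- the set of vertices where d vanishes is a vertex cover
    have hcov : IsVertexCover G {i | d i = 0} := by
      intro k l hkl
      by_contra hb
      push_neg at hb
      obtain ⟨hk, hl⟩ := hb
      have hkl2 : Finsupp.single k 1 + Finsupp.single l 1 ≤ d := pair_le hkl.ne hk hl
      have : Finsupp.single u 1 + Finsupp.single v 1 + Finsupp.single k 1
          + Finsupp.single l 1 ≤ m := by
        calc Finsupp.single u 1 + Finsupp.single v 1 + Finsupp.single k 1 + Finsupp.single l 1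
            = e + (Finsupp.single k 1 + Finsupp.single l 1) := by rw [he]; abel
          _ ≤ e + d := add_le_add_right hkl2 e
          _ = m := by rw [add_comm, hde]
      exact hno u v k l huv hkl this
    obtain ⟨C, hCsub, hCmin⟩ := exists_min_cover G ({i | d i = 0}).ncard _ le_rfl hcov
    obtain ⟨t, htC, hts, htm⟩ := h C hCmin
    have hb1 : ∀ i ∈ t.support, m i ≤ e i := by
      intro i hi
      have : d i = 0 := hCsub (htC hi)
      have := congrArg (fun u : Fin n →₀ ℕ => u i) hde
      simp only [Finsupp.coe_add, Pi.add_apply] at this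
      omega
    have h3 : (3 : ℕ) ≤ ∑ i ∈ t.support, e i := by
      calc (3 : ℕ) = ∑ i ∈ t.support, t i := hts.symm
        _ ≤ ∑ i ∈ t.support, m i := Finset.sum_le_sum (fun i _ => htm i)
        _ ≤ ∑ i ∈ t.support, e i := Finset.sum_le_sum hb1
    have h4 : ∑ i ∈ t.support, e i ≤ ∑ i : Fin n, e i :=
      Finset.sum_le_sum_of_subset (Finset.subset_univ _)
    have h5 : ∑ i : Fin n, e i = 2 := by
      have hu' : ∑ i : Fin n, (Finsupp.single u 1 : Fin n →₀ ℕ) i = 1 := by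
        simp [Finsupp.single_apply]
      have hv' : ∑ i : Fin n, (Finsupp.single v 1 : Fin n →₀ ℕ) i = 1 := by
        simp [Finsupp.single_apply]
      simp only [he, Finsupp.coe_add, Pi.add_apply, Finset.sum_add_distrib, hu', hv']
    omega
  · push_neg at hedge
    have hcov : IsVertexCover G {i | m i = 0} := by
      intro k l hkl
      by_contra hb
      push_neg at hb
      exact hb.2 (hedge k l hkl hb.1)
    obtain ⟨C, hCsub, hCmin⟩ := exists_min_cover G ({i | m i = 0}).ncard _ le_rfl hcov
    obtain ⟨t, htC, hts, htm⟩ := h C hCmin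
    have h3 : (3 : ℕ) ≤ ∑ i ∈ t.support, m i := by
      calc (3 : ℕ) = ∑ i ∈ t.support, t i := hts.symm
        _ ≤ ∑ i ∈ t.support, m i := Finset.sum_le_sum (fun i _ => htm i)
    have h0 : ∑ i ∈ t.support, m i = 0 :=
      Finset.sum_eq_zero (fun i hi => hCsub (htC hi))
    omega

/-- For every graph `G`, `I(G)^{(3)} ⊆ I(G)^2`. -/
theorem stmt_7 (K : Type*) [Field K] {n : ℕ} (G : SimpleGraph (Fin n)) :
    symbPower K G 3 ≤ edgeIdeal K G ^ 2 := by
  intro f hf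
  simp only [symbPower, Ideal.mem_iInf] at hf
  rw [← f.support_sum_monomial_coeff]
  apply Ideal.sum_mem
  intro m hm
  have hkey : ∀ C : Set (Fin n), IsMinVertexCover G C →
      ∃ t : Fin n →₀ ℕ, ↑t.support ⊆ C ∧ (t.sum fun _ e => e) = 3 ∧ t ≤ m := by
    intro C hC
    have h3 := hf C hC
    rw [varIdeal_pow_eq] at h3
    obtain ⟨t, ⟨h1, h2⟩, h4⟩ := mem_ideal_span_monomial_image.mp h3 m hm
    exact ⟨t, h1, h2, h4⟩
  obtain ⟨i, j, k, l, hij, hkl, hle⟩ := key_lemma G m hkey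
  set e : Fin n →₀ ℕ := Finsupp.single i 1 + Finsupp.single j 1 + Finsupp.single k 1
      + Finsupp.single l 1 with hedef
  have hde : (m - e) + e = m := tsub_add_cancel_of_le hle
  have hXmem : (X i * X j : MvPolynomial (Fin n) K) * (X k * X l) ∈ edgeIdeal K G ^ 2 := by
    rw [pow_two]
    exact Ideal.mul_mem_mul (Ideal.subset_span ⟨i, j, hij, rfl⟩)
      (Ideal.subset_span ⟨k, l, hkl, rfl⟩)
  have hfact : (monomial m) (coeff m f) =
      (X i * X j : MvPolynomial (Fin n) K) * (X k * X l) * monomial (m - e) (coeff m f) := by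
    have hexp : (Finsupp.single i 1 + Finsupp.single j 1)
        + (Finsupp.single k 1 + Finsupp.single l 1) + (m - e) = m := by
      conv_rhs => rw [← hde]
      rw [hedef]
      abel_nf
      exact add_comm _ _
    simp only [X, monomial_mul, one_mul]
    rw [hexp]
  rw [hfact]
  exact Ideal.mul_mem_right _ _ hXmem
end

section
/- For every graph G, the fourth symbolic power of the edge ideal is contained in the square of the edge ideal: I(G)^{(4)} ⊆ I(G)^2. -/
open MvPolynomial

/- ### Auxiliary material -/

open scoped Classical in
/-- Weight of a monomial exponent vector on a vertex set. -/
noncomputable def wt {n : ℕ} (C : Set (Fin n)) (m : Fin n →₀ ℕ) : ℕ :=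
  ∑ i : Fin n, if i ∈ C then m i else 0

open scoped Classical Pointwise

lemma wt_mono {n : ℕ} {C : Set (Fin n)} {f g : Fin n →₀ ℕ} (h : f ≤ g) :
    wt C f ≤ wt C g := by
  unfold wt
  refine Finset.sum_le_sum fun i _ => ?_
  split_ifs
  · exact Finsupp.le_def.mp h i
  · exact le_rfl

lemma wt_add {n : ℕ} (C : Set (Fin n)) (f g : Fin n →₀ ℕ) :
    wt C (f + g) = wt C f + wt C g := by
  unfold wt
  rw [← Finset.sum_add_distrib]
  refine Finset.sum_congr rfl fun i _ => ?_
  split_ifs <;> simp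

lemma wt_single {n : ℕ} (C : Set (Fin n)) (a : Fin n) :
    wt C (Finsupp.single a 1) = if a ∈ C then 1 else 0 := by
  unfold wt
  rw [show ∀ (F : Fin n → ℕ), (∑ i : Fin n, F i) = ∑ i : Fin n, F i from fun _ => rfl]
  have : ∀ i : Fin n, (if i ∈ C then (Finsupp.single a 1 : Fin n →₀ ℕ) i else 0)
      = if a = i then (if i ∈ C then 1 else 0) else 0 := by
    intro i
    rw [Finsupp.single_apply]
    split_ifs <;> simp_all
  rw [Finset.sum_congr rfl fun i _ => this i, Finset.sum_ite_eq]
  simp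

/-- Every vertex cover contains a minimal vertex cover. -/
lemma exists_minCover_subset {n : ℕ} (G : SimpleGraph (Fin n)) :
    ∀ k (C : Set (Fin n)), C.ncard ≤ k → IsVertexCover G C →
      ∃ C' ⊆ C, IsMinVertexCover G C' := by
  intro k
  induction k with
  | zero =>
    intro C hcard hcov
    refine ⟨C, subset_rfl, hcov, fun C' hsub hcov' => ?_⟩
    have : C = ∅ := by
      have := Set.ncard_eq_zero (Set.toFinite C) |>.mp (Nat.le_zero.mp hcard)
      exact this
    subst this
    exact Set.subset_empty_iff.mp hsub
  | succ k ih =>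
    intro C hcard hcov
    by_cases h : ∀ C' ⊆ C, IsVertexCover G C' → C' = C
    · exact ⟨C, subset_rfl, hcov, h⟩
    · push_neg at h
      obtain ⟨C', hsub, hcov', hne⟩ := h
      have hss : C' ⊂ C := HasSubset.Subset.ssubset_of_ne hsub hne
      have hlt : C'.ncard < C.ncard := Set.ncard_lt_ncard hss (Set.toFinite C)
      obtain ⟨C'', h1, h2⟩ := ih C' (by omega) hcov'
      exact ⟨C'', h1.trans hsub, h2⟩

/-- If every minimal vertex cover has positive weight, the support of `m` contains an edge. -/
lemma exists_edge {n : ℕ} (G : SimpleGraph (Fin n)) (m : Fin n →₀ ℕ)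
    (h : ∀ C, IsMinVertexCover G C → 1 ≤ wt C m) :
    ∃ a b, G.Adj a b ∧ 1 ≤ m a ∧ 1 ≤ m b := by
  by_contra hcon
  push_neg at hcon
  have hcov : IsVertexCover G {i | m i = 0} := by
    intro i j hij
    rcases Nat.eq_zero_or_pos (m i) with h0 | h0
    · exact Or.inl h0
    rcases Nat.eq_zero_or_pos (m j) with h1 | h1
    · exact Or.inr h1
    exact absurd h1 (Nat.lt_iff_add_one_le.not.mpr (by
      have := hcon i j hij h0
      omega))
  obtain ⟨C', hsub, hmin⟩ := exists_minCover_subset G _ _ le_rfl hcov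
  have h0 : wt C' m = 0 := by
    unfold wt
    refine Finset.sum_eq_zero fun i _ => ?_
    split_ifs with hi
    · exact hsub hi
    · rfl
  have := h C' hmin
  omega

lemma pair_le_s8 {n : ℕ} {a b : Fin n} (hne : a ≠ b) {f : Fin n →₀ ℕ}
    (ha : 1 ≤ f a) (hb : 1 ≤ f b) :
    Finsupp.single a 1 + Finsupp.single b 1 ≤ f := by
  rw [Finsupp.le_def]
  intro i
  rw [Finsupp.add_apply, Finsupp.single_apply, Finsupp.single_apply]
  split_ifs with h1 h2 h2 <;> simp_all <;> omega

/-- The combinatorial core: a monomial of weight `≥ 4` on every minimal vertex cover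
dominates the sum of two edges. -/
lemma key_combinatorial {n : ℕ} (G : SimpleGraph (Fin n)) (m : Fin n →₀ ℕ)
    (h : ∀ C, IsMinVertexCover G C → 4 ≤ wt C m) :
    ∃ a b c d, G.Adj a b ∧ G.Adj c d ∧
      (Finsupp.single a 1 + Finsupp.single b 1) +
        (Finsupp.single c 1 + Finsupp.single d 1) ≤ m := by
  obtain ⟨a, b, hab, ha, hb⟩ := exists_edge G m (fun C hC => le_trans (by norm_num) (h C hC))
  set s : Fin n →₀ ℕ := Finsupp.single a 1 + Finsupp.single b 1 with hs
  have hsle : s ≤ m := pair_le_s8 hab.ne ha hb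
  have hs2 : ∀ C : Set (Fin n), wt C s ≤ 2 := by
    intro C
    rw [hs, wt_add, wt_single, wt_single]
    split_ifs <;> omega
  have hm' : ∀ C, IsMinVertexCover G C → 1 ≤ wt C (m - s) := by
    intro C hC
    have h4 := h C hC
    have h2 := hs2 C
    have hle : wt C m ≤ wt C (m - s) + wt C s := by
      have : m ≤ (m - s) + s := by
        rw [Finsupp.le_def]
        intro i
        rw [Finsupp.add_apply, Finsupp.tsub_apply]
        omega
      calc wt C m ≤ wt C ((m - s) + s) := wt_mono this
        _ = wt C (m - s) + wt C s := wt_add _ _ _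
    omega
  obtain ⟨c, d, hcd, hc, hd⟩ := exists_edge G (m - s) hm'
  refine ⟨a, b, c, d, hab, hcd, ?_⟩
  have htle : Finsupp.single c 1 + Finsupp.single d 1 ≤ m - s := pair_le_s8 hcd.ne hc hd
  show s + (Finsupp.single c 1 + Finsupp.single d 1) ≤ m
  rw [Finsupp.le_def]
  intro i
  have h1 := Finsupp.le_def.mp hsle i
  have h2 := Finsupp.le_def.mp htle i
  rw [Finsupp.tsub_apply] at h2
  rw [Finsupp.add_apply]
  omega

/- ### Algebra: monomial ideal computations -/

lemma monoSpan_mul (K : Type*) [Field K] {n : ℕ} (A B : Set (Fin n →₀ ℕ)) :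
    Ideal.span ((fun s => (monomial s (1 : K))) '' A) *
      Ideal.span ((fun s => (monomial s (1 : K))) '' B) =
    Ideal.span ((fun s => (monomial s (1 : K))) '' (A + B)) := by
  rw [Ideal.span_mul_span']
  congr 1
  ext p
  constructor
  · rintro ⟨_, ⟨a, ha, rfl⟩, _, ⟨b, hb, rfl⟩, rfl⟩
    exact ⟨a + b, Set.add_mem_add ha hb, by simp [monomial_mul]⟩
  · rintro ⟨_, ⟨a, ha, b, hb, rfl⟩, rfl⟩
    exact ⟨monomial a 1, ⟨a, ha, rfl⟩, monomial b 1, ⟨b, hb, rfl⟩,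
      by simp [monomial_mul]⟩

/-- The set of exponent vectors of edges of `G`. -/
def edgeSet' {n : ℕ} (G : SimpleGraph (Fin n)) : Set (Fin n →₀ ℕ) :=
  {s | ∃ i j, G.Adj i j ∧ s = Finsupp.single i 1 + Finsupp.single j 1}

lemma edgeIdeal_eq (K : Type*) [Field K] {n : ℕ} (G : SimpleGraph (Fin n)) :
    edgeIdeal K G = Ideal.span ((fun s => (monomial s (1 : K))) '' edgeSet' G) := by
  unfold edgeIdeal
  congr 1
  ext p
  constructor
  · rintro ⟨i, j, hij, rfl⟩
    exact ⟨Finsupp.single i 1 + Finsupp.single j 1, ⟨i, j, hij, rfl⟩,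
      by rw [X, X, monomial_mul, one_mul]⟩
  · rintro ⟨_, ⟨i, j, hij, rfl⟩, rfl⟩
    exact ⟨i, j, hij, by rw [X, X, monomial_mul, one_mul]⟩

lemma varIdeal_eq (K : Type*) [Field K] {n : ℕ} (C : Set (Fin n)) :
    varIdeal K C =
      Ideal.span ((fun s => (monomial s (1 : K))) '' ((fun i => Finsupp.single i 1) '' C)) := by
  unfold varIdeal
  rw [Set.image_image]
  rfl

/-- For every graph `G`, `I(G)^{(4)} ⊆ I(G)^2`. -/
theorem stmt_8 (K : Type*) [Field K] {n : ℕ} (G : SimpleGraph (Fin n)) :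
    symbPower K G 4 ≤ edgeIdeal K G ^ 2 := by
  intro x hx
  simp only [symbPower, Ideal.mem_iInf] at hx
  -- rewrite the goal as membership in a monomial ideal
  rw [edgeIdeal_eq, sq, monoSpan_mul, mem_ideal_span_monomial_image]
  intro m hm
  -- extract the weight condition from the hypothesis
  have hwt : ∀ C, IsMinVertexCover G C → 4 ≤ wt C m := by
    intro C hC
    have hxC := hx C hC
    set V : Set (Fin n →₀ ℕ) := (fun i => Finsupp.single i 1) '' C with hV
    have heq : varIdeal K C ^ 4 =
        Ideal.span ((fun s => (monomial s (1 : K))) '' (V + V + V + V)) := by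
      rw [varIdeal_eq, show (4 : ℕ) = 1 + 1 + 1 + 1 from rfl, pow_add, pow_add, pow_add,
        pow_one, monoSpan_mul, monoSpan_mul, monoSpan_mul]
    rw [heq, mem_ideal_span_monomial_image] at hxC
    obtain ⟨si, hsi, hle⟩ := hxC m hm
    obtain ⟨u, ⟨v, ⟨w, hw, t1, ht1, rfl⟩, t2, ht2, rfl⟩, t3, ht3, rfl⟩ := hsi
    obtain ⟨i1, hi1, rfl⟩ := hw
    obtain ⟨i2, hi2, rfl⟩ := ht1
    obtain ⟨i3, hi3, rfl⟩ := ht2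
    obtain ⟨i4, hi4, rfl⟩ := ht3
    calc (4 : ℕ) = wt C (Finsupp.single i1 1 + Finsupp.single i2 1 + Finsupp.single i3 1
          + Finsupp.single i4 1) := by
          rw [wt_add, wt_add, wt_add, wt_single, wt_single, wt_single, wt_single,
            if_pos hi1, if_pos hi2, if_pos hi3, if_pos hi4]
      _ ≤ wt C m := wt_mono hle
  obtain ⟨a, b, c, d, hab, hcd, hle⟩ := key_combinatorial G m hwt
  exact ⟨(Finsupp.single a 1 + Finsupp.single b 1) +
      (Finsupp.single c 1 + Finsupp.single d 1),
    Set.add_mem_add ⟨a, b, hab, rfl⟩ ⟨c, d, hcd, rfl⟩, hle⟩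
end

section
/- Let G be a graph and let v_1, v_2, v_3, v_4, v_5 be five pairwise adjacent vertices of G (i.e., they induce a complete graph K_5 in G). Then the monomial v_1 v_2 v_3 v_4 v_5 belongs to I(G)^{(4)}. -/
open MvPolynomial

/- A vertex cover `C` contains all but at most one vertex of a clique, since two vertices of the
clique outside `C` would span an uncovered edge. So for a clique `v_1, …, v_m` at least `m - 1`
of the variables `x_{v_k}` lie in `p_C`, and their product lies in `p_C ^ (m - 1)`. -/

section

variable {K : Type*} [Field K] {n : ℕ} {ι : Type*}

theorem IsVertexCover.eq_of_pairwise_adj {G : SimpleGraph (Fin n)} {C : Set (Fin n)}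
    (hC : IsVertexCover G C) {v : ι → Fin n} (hv : Pairwise fun k l => G.Adj (v k) (v l))
    {a b : ι} (ha : v a ∉ C) (hb : v b ∉ C) : a = b := by
  by_contra hab
  exact (hC (hv hab)).elim ha hb

theorem prod_X_mem_varIdeal_pow_card (C : Set (Fin n)) (v : ι → Fin n) (T : Finset ι)
    (hT : ∀ k ∈ T, v k ∈ C) :
    (∏ k ∈ T, X (v k) : MvPolynomial (Fin n) K) ∈ varIdeal K C ^ T.card := by
  rw [← Finset.prod_const]
  exact Ideal.prod_mem_prod fun k hk => Ideal.subset_span ⟨v k, hT k hk, rfl⟩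

theorem IsVertexCover.prod_X_mem_varIdeal_pow [Fintype ι] {G : SimpleGraph (Fin n)}
    {C : Set (Fin n)} (hC : IsVertexCover G C) {v : ι → Fin n}
    (hv : Pairwise fun k l => G.Adj (v k) (v l)) :
    (∏ k, X (v k) : MvPolynomial (Fin n) K) ∈ varIdeal K C ^ (Fintype.card ι - 1) := by
  classical
  set T := Finset.univ.filter fun k => v k ∈ C
  have hTc : Tᶜ.card ≤ 1 := Finset.card_le_one.mpr fun a ha b hb =>
    hC.eq_of_pairwise_adj hv (by simpa [T] using ha) (by simpa [T] using hb)
  have hcard : Fintype.card ι - 1 ≤ T.card := by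
    have := Finset.card_compl T
    omega
  have hT : (∏ k ∈ T, X (v k) : MvPolynomial (Fin n) K) ∈ varIdeal K C ^ (Fintype.card ι - 1) :=
    Ideal.pow_le_pow_right hcard <|
      prod_X_mem_varIdeal_pow_card C v T fun k hk => (Finset.mem_filter.mp hk).2
  rw [← Finset.prod_mul_prod_compl T]
  exact Ideal.mul_mem_right _ _ hT

theorem prod_X_mem_symbPower_of_pairwise_adj [Fintype ι] {G : SimpleGraph (Fin n)}
    {v : ι → Fin n} (hv : Pairwise fun k l => G.Adj (v k) (v l)) :
    (∏ k, X (v k) : MvPolynomial (Fin n) K) ∈ symbPower K G (Fintype.card ι - 1) :=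
  Ideal.mem_iInf.mpr fun _ => Ideal.mem_iInf.mpr fun hC => hC.1.prod_X_mem_varIdeal_pow hv

end

/-- If `v_1, …, v_5` are five pairwise adjacent vertices of `G`
(inducing a `K_5`), then `v_1 v_2 v_3 v_4 v_5 ∈ I(G)^{(4)}`. -/
theorem stmt_11 (K : Type*) [Field K] {n : ℕ} (G : SimpleGraph (Fin n))
    (v : Fin 5 → Fin n) (hadj : ∀ k l : Fin 5, k ≠ l → G.Adj (v k) (v l)) :
    (∏ k, X (v k)) ∈ symbPower K G 4 :=
  prod_X_mem_symbPower_of_pairwise_adj (K := K) (v := v) hadj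
end

section
/- Let G be the graph with vertex set {x_1, …, x_7} and edge set {x_1x_2, x_1x_3, x_2x_3, x_3x_4, x_4x_5, x_5x_6, x_5x_7, x_6x_7}, and let u = (x_1x_2)(x_6x_7) = x_1 x_2 x_6 x_7. Let X_0 be the set of variables x_k that belong to (I(G)^{(4)} : u). Then x_3 x_5 ∈ (I(G)^{(4)} : u), but x_3 x_5 ∉ (I(G)^3 : u) + (X_0), where (X_0) denotes the ideal generated by the variables in X_0. -/
open MvPolynomial

/-! ### Auxiliary material -/

open Pointwise

noncomputable def monF (K : Type*) [Field K] : (Fin 7 →₀ ℕ) → MvPolynomial (Fin 7) K :=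
  fun s => monomial s (1 : K)

noncomputable def eV (i j : Fin 7) : Fin 7 →₀ ℕ := Finsupp.single i 1 + Finsupp.single j 1

noncomputable def ES : Set (Fin 7 →₀ ℕ) :=
  {eV 0 1, eV 0 2, eV 1 2, eV 2 3, eV 3 4, eV 4 5, eV 4 6, eV 5 6}

lemma aux_X_mul_X (K : Type*) [Field K] (i j : Fin 7) :
    (X i : MvPolynomial (Fin 7) K) * X j = monomial (eV i j) 1 := by
  calc (X i : MvPolynomial (Fin 7) K) * X j = X i ^ 1 * X j ^ 1 := by ring
    _ = monomial (eV i j) 1 := by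
        rw [X_pow_eq_monomial, X_pow_eq_monomial, monomial_mul, one_mul, eV]

lemma eV_comm (i j : Fin 7) : eV i j = eV j i := by rw [eV, eV, add_comm]

lemma aux_adj_cases (G : SimpleGraph (Fin 7))
    (hG : G = SimpleGraph.fromEdgeSet
      {s(0, 1), s(0, 2), s(1, 2), s(2, 3), s(3, 4), s(4, 5), s(4, 6), s(5, 6)}) (i j : Fin 7)
    (h : G.Adj i j) :
    (i = 0 ∧ j = 1 ∨ i = 1 ∧ j = 0) ∨ (i = 0 ∧ j = 2 ∨ i = 2 ∧ j = 0) ∨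
    (i = 1 ∧ j = 2 ∨ i = 2 ∧ j = 1) ∨ (i = 2 ∧ j = 3 ∨ i = 3 ∧ j = 2) ∨
    (i = 3 ∧ j = 4 ∨ i = 4 ∧ j = 3) ∨ (i = 4 ∧ j = 5 ∨ i = 5 ∧ j = 4) ∨
    (i = 4 ∧ j = 6 ∨ i = 6 ∧ j = 4) ∨ (i = 5 ∧ j = 6 ∨ i = 6 ∧ j = 5) := by
  subst hG
  rw [SimpleGraph.fromEdgeSet_adj] at h
  obtain ⟨hm, -⟩ := h
  simpa only [Set.mem_insert_iff, Set.mem_singleton_iff, Sym2.eq_iff] using hm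

lemma aux_adj_all (G : SimpleGraph (Fin 7))
    (hG : G = SimpleGraph.fromEdgeSet
      {s(0, 1), s(0, 2), s(1, 2), s(2, 3), s(3, 4), s(4, 5), s(4, 6), s(5, 6)}) :
    G.Adj 0 1 ∧ G.Adj 0 2 ∧ G.Adj 1 2 ∧ G.Adj 2 3 ∧ G.Adj 3 4 ∧ G.Adj 4 5 ∧
      G.Adj 4 6 ∧ G.Adj 5 6 := by
  subst hG
  refine ⟨?_, ?_, ?_, ?_, ?_, ?_, ?_, ?_⟩ <;> simp [SimpleGraph.fromEdgeSet_adj]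

lemma aux_edgeIdeal_le (K : Type*) [Field K] (G : SimpleGraph (Fin 7))
    (hG : G = SimpleGraph.fromEdgeSet
      {s(0, 1), s(0, 2), s(1, 2), s(2, 3), s(3, 4), s(4, 5), s(4, 6), s(5, 6)}) :
    edgeIdeal K G ≤ Ideal.span (monF K '' ES) := by
  rw [edgeIdeal, Ideal.span_le]
  rintro m ⟨i, j, hadj, rfl⟩
  have hev : ∃ s ∈ ES, eV i j = s := by
    rcases aux_adj_cases G hG i j hadj with
      (⟨rfl, rfl⟩ | ⟨rfl, rfl⟩) | (⟨rfl, rfl⟩ | ⟨rfl, rfl⟩) | (⟨rfl, rfl⟩ | ⟨rfl, rfl⟩) |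
      (⟨rfl, rfl⟩ | ⟨rfl, rfl⟩) | (⟨rfl, rfl⟩ | ⟨rfl, rfl⟩) | (⟨rfl, rfl⟩ | ⟨rfl, rfl⟩) |
      (⟨rfl, rfl⟩ | ⟨rfl, rfl⟩) | (⟨rfl, rfl⟩ | ⟨rfl, rfl⟩)
    · exact ⟨eV 0 1, by simp [ES], rfl⟩
    · exact ⟨eV 0 1, by simp [ES], eV_comm 1 0⟩
    · exact ⟨eV 0 2, by simp [ES], rfl⟩
    · exact ⟨eV 0 2, by simp [ES], eV_comm 2 0⟩
    · exact ⟨eV 1 2, by simp [ES], rfl⟩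
    · exact ⟨eV 1 2, by simp [ES], eV_comm 2 1⟩
    · exact ⟨eV 2 3, by simp [ES], rfl⟩
    · exact ⟨eV 2 3, by simp [ES], eV_comm 3 2⟩
    · exact ⟨eV 3 4, by simp [ES], rfl⟩
    · exact ⟨eV 3 4, by simp [ES], eV_comm 4 3⟩
    · exact ⟨eV 4 5, by simp [ES], rfl⟩
    · exact ⟨eV 4 5, by simp [ES], eV_comm 5 4⟩
    · exact ⟨eV 4 6, by simp [ES], rfl⟩
    · exact ⟨eV 4 6, by simp [ES], eV_comm 6 4⟩
    · exact ⟨eV 5 6, by simp [ES], rfl⟩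
    · exact ⟨eV 5 6, by simp [ES], eV_comm 6 5⟩
  obtain ⟨s, hs, hev⟩ := hev
  have : (X i : MvPolynomial (Fin 7) K) * X j = monF K s := by
    rw [aux_X_mul_X, hev, monF]
  rw [this]
  exact Ideal.subset_span ⟨s, hs, rfl⟩

lemma aux_span_mul (K : Type*) [Field K] (A B : Set (Fin 7 →₀ ℕ)) :
    Ideal.span (monF K '' A) * Ideal.span (monF K '' B) = Ideal.span (monF K '' (A + B)) := by
  rw [Ideal.span_mul_span']
  congr 1
  ext x
  simp only [Set.mem_mul, Set.mem_add, Set.mem_image]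
  constructor
  · rintro ⟨-, ⟨a, ha, rfl⟩, -, ⟨b, hb, rfl⟩, rfl⟩
    exact ⟨a + b, ⟨a, ha, b, hb, rfl⟩, by simp [monF, monomial_mul]⟩
  · rintro ⟨-, ⟨a, ha, b, hb, rfl⟩, rfl⟩
    exact ⟨monF K a, ⟨a, ha, rfl⟩, monF K b, ⟨b, hb, rfl⟩, by simp [monF, monomial_mul]⟩

lemma aux_ES_AB (v : Fin 7 →₀ ℕ) (hv : v ∈ ES) :
    2 ≤ v 0 + v 1 + v 2 + 2 * v 3 ∨ 2 ≤ v 4 + v 5 + v 6 + 2 * v 3 := by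
  simp only [ES, Set.mem_insert_iff, Set.mem_singleton_iff] at hv
  rcases hv with rfl | rfl | rfl | rfl | rfl | rfl | rfl | rfl <;>
    simp [eV, Finsupp.single_apply]

lemma aux_not_mem_cube (K : Type*) [Field K] :
    (X 2 * X 4) * ((X 0 * X 1) * ((X 5 : MvPolynomial (Fin 7) K) * X 6)) ∉
      Ideal.span (monF K '' (ES + ES + ES)) := by
  intro h
  have hD : (X 2 * X 4) * ((X 0 * X 1) * ((X 5 : MvPolynomial (Fin 7) K) * X 6))
      = monomial (eV 2 4 + (eV 0 1 + eV 5 6)) 1 := by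
    rw [aux_X_mul_X, aux_X_mul_X, aux_X_mul_X, monomial_mul, monomial_mul, one_mul, one_mul]
  rw [hD] at h
  unfold monF at h
  rw [mem_ideal_span_monomial_image] at h
  classical
  have hsupp : (eV 2 4 + (eV 0 1 + eV 5 6)) ∈
      (monomial (eV 2 4 + (eV 0 1 + eV 5 6)) (1 : K)).support := by
    rw [support_monomial, if_neg (one_ne_zero)]
    exact Finset.mem_singleton_self _
  obtain ⟨t, ht, hle⟩ := h _ hsupp
  obtain ⟨p, hp, e3, he3, rfl⟩ := Set.mem_add.mp ht
  obtain ⟨e1, he1, e2, he2, rfl⟩ := Set.mem_add.mp hp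
  have hc : ∀ i, e1 i + e2 i + e3 i ≤ (eV 2 4 + (eV 0 1 + eV 5 6)) i := fun i => by
    simpa [Finsupp.add_apply] using Finsupp.le_def.mp hle i
  have h0 := hc 0; have h1 := hc 1; have h2 := hc 2; have h3 := hc 3
  have h4 := hc 4; have h5 := hc 5; have h6 := hc 6
  simp [eV, Finsupp.add_apply, Finsupp.single_apply] at h0 h1 h2 h3 h4 h5 h6
  have a1 := aux_ES_AB e1 he1
  have a2 := aux_ES_AB e2 he2
  have a3 := aux_ES_AB e3 he3
  omega

lemma aux_memVar (K : Type*) [Field K] {n : ℕ} {C : Set (Fin n)} {i : Fin n} (hi : i ∈ C) :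
    X i ∈ varIdeal K C :=
  Ideal.subset_span ⟨i, hi, rfl⟩

lemma aux_prod_mem_sq (K : Type*) [Field K] {n : ℕ} {C : Set (Fin n)} {a b : Fin n}
    (ha : a ∈ C) (hb : b ∈ C) (q p : MvPolynomial (Fin n) K)
    (hp : p = X a * X b * q) : p ∈ varIdeal K C ^ 2 := by
  subst hp
  rw [sq]
  exact Ideal.mul_mem_right q _ (Ideal.mul_mem_mul (aux_memVar K ha) (aux_memVar K hb))

lemma aux_triangle (K : Type*) [Field K] {n : ℕ} {C : Set (Fin n)} {a b c : Fin n}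
    (hab : a ∈ C ∨ b ∈ C) (hac : a ∈ C ∨ c ∈ C) (hbc : b ∈ C ∨ c ∈ C) :
    X a * X b * (X c : MvPolynomial (Fin n) K) ∈ varIdeal K C ^ 2 := by
  rcases hab with h1 | h1 <;> rcases hac with h2 | h2 <;> rcases hbc with h3 | h3
  · exact aux_prod_mem_sq K h1 h3 (X c) _ (by ring)
  · exact aux_prod_mem_sq K h1 h3 (X b) _ (by ring)
  · exact aux_prod_mem_sq K h1 h3 (X c) _ (by ring)
  · exact aux_prod_mem_sq K h1 h2 (X b) _ (by ring)
  · exact aux_prod_mem_sq K h2 h1 (X c) _ (by ring)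
  · exact aux_prod_mem_sq K h2 h1 (X c) _ (by ring)
  · exact aux_prod_mem_sq K h1 h2 (X a) _ (by ring)
  · exact aux_prod_mem_sq K h1 h2 (X a) _ (by ring)

lemma aux_minCover (G : SimpleGraph (Fin 7))
    (hG : G = SimpleGraph.fromEdgeSet
      {s(0, 1), s(0, 2), s(1, 2), s(2, 3), s(3, 4), s(4, 5), s(4, 6), s(5, 6)}) :
    IsMinVertexCover G ({1, 2, 4, 6} : Set (Fin 7)) := by
  obtain ⟨a01, a02, a12, a23, a34, a45, a46, a56⟩ := aux_adj_all G hG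
  constructor
  · intro i j h
    rcases aux_adj_cases G hG i j h with
      (⟨rfl, rfl⟩ | ⟨rfl, rfl⟩) | (⟨rfl, rfl⟩ | ⟨rfl, rfl⟩) | (⟨rfl, rfl⟩ | ⟨rfl, rfl⟩) |
      (⟨rfl, rfl⟩ | ⟨rfl, rfl⟩) | (⟨rfl, rfl⟩ | ⟨rfl, rfl⟩) | (⟨rfl, rfl⟩ | ⟨rfl, rfl⟩) |
      (⟨rfl, rfl⟩ | ⟨rfl, rfl⟩) | (⟨rfl, rfl⟩ | ⟨rfl, rfl⟩) <;> simp
  · intro C' hsub hcov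
    apply Set.Subset.antisymm hsub
    intro x hx
    have h0 : (0 : Fin 7) ∉ C' := fun h => by simpa using hsub h
    have h3 : (3 : Fin 7) ∉ C' := fun h => by simpa using hsub h
    have h5 : (5 : Fin 7) ∉ C' := fun h => by simpa using hsub h
    have m1 : (1 : Fin 7) ∈ C' := (hcov a01).resolve_left h0
    have m2 : (2 : Fin 7) ∈ C' := (hcov a23).resolve_right h3
    have m4 : (4 : Fin 7) ∈ C' := (hcov a34).resolve_left h3
    have m6 : (6 : Fin 7) ∈ C' := (hcov a56).resolve_left h5
    rcases hx with rfl | rfl | rfl | rfl <;> assumption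

lemma aux_not_mem_pow4 (K : Type*) [Field K] (k : Fin 7) :
    X k * ((X 0 * X 1) * ((X 5 : MvPolynomial (Fin 7) K) * X 6)) ∉
      varIdeal K ({1, 2, 4, 6} : Set (Fin 7)) ^ 4 := by
  intro h
  classical
  set c : Fin 7 → Polynomial K :=
    fun i => if i = 1 ∨ i = 2 ∨ i = 4 ∨ i = 6 then Polynomial.X else 1 with hc
  have hmap : Ideal.map (aeval c : MvPolynomial (Fin 7) K →ₐ[K] Polynomial K)
      (varIdeal K ({1, 2, 4, 6} : Set (Fin 7))) ≤ Ideal.span {Polynomial.X} := by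
    rw [varIdeal, Ideal.map_span, Ideal.span_le]
    rintro x ⟨y, ⟨i, hi, rfl⟩, rfl⟩
    have : (aeval c) (X i : MvPolynomial (Fin 7) K) = Polynomial.X := by
      rw [aeval_X, hc]
      rcases hi with rfl | rfl | rfl | rfl <;> simp
    rw [this]
    exact Ideal.subset_span rfl
  have h2 : (aeval c) (X k * ((X 0 * X 1) * ((X 5 : MvPolynomial (Fin 7) K) * X 6)))
      ∈ Ideal.span {Polynomial.X} ^ 4 := by
    have hm := Ideal.mem_map_of_mem (aeval c : MvPolynomial (Fin 7) K →ₐ[K] Polynomial K) h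
    rw [Ideal.map_pow] at hm
    exact (by gcongr : Ideal.map (aeval c) (varIdeal K ({1, 2, 4, 6} : Set (Fin 7))) ^ 4
      ≤ Ideal.span {Polynomial.X} ^ 4) hm
  rw [Ideal.span_singleton_pow, Ideal.mem_span_singleton] at h2
  have e0 : c 0 = 1 := if_neg (by decide)
  have e1 : c 1 = Polynomial.X := if_pos (by decide)
  have e5 : c 5 = 1 := if_neg (by decide)
  have e6 : c 6 = Polynomial.X := if_pos (by decide)
  have hck : c k ∣ Polynomial.X := by
    by_cases hk : k = 1 ∨ k = 2 ∨ k = 4 ∨ k = 6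
    · rw [show c k = Polynomial.X from if_pos hk]
    · rw [show c k = 1 from if_neg hk]
      exact one_dvd _
  have hval : (aeval c) (X k * ((X 0 * X 1) * ((X 5 : MvPolynomial (Fin 7) K) * X 6)))
      = c k * Polynomial.X ^ 2 := by
    simp only [map_mul, aeval_X, e0, e1, e5, e6]
    ring
  rw [hval] at h2
  have hdvd : (Polynomial.X : Polynomial K) ^ 4 ∣ Polynomial.X ^ 3 := by
    refine h2.trans ?_
    calc c k * Polynomial.X ^ 2 ∣ Polynomial.X * Polynomial.X ^ 2 :=
          mul_dvd_mul_right hck _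
      _ = Polynomial.X ^ 3 := by ring
  have hne : (Polynomial.X : Polynomial K) ^ 3 ≠ 0 := pow_ne_zero _ Polynomial.X_ne_zero
  have := Polynomial.natDegree_le_of_dvd hdvd hne
  simp [Polynomial.natDegree_X_pow] at this

/-- Let `G` be the graph on `{x_1, …, x_7}` (here indexed `0, …, 6`)
with edges `x_1x_2, x_1x_3, x_2x_3, x_3x_4, x_4x_5, x_5x_6, x_5x_7, x_6x_7`, and let
`u = (x_1x_2)(x_6x_7)`. Then `x_3 x_5 ∈ (I(G)^{(4)} : u)`, but
`x_3 x_5 ∉ (I(G)^3 : u) + (X_0)`, where `X_0` is the set of variables belonging to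
`(I(G)^{(4)} : u)`. -/
theorem stmt_13 (K : Type*) [Field K]
    (G : SimpleGraph (Fin 7))
    (hG : G = SimpleGraph.fromEdgeSet
      {s(0, 1), s(0, 2), s(1, 2), s(2, 3), s(3, 4), s(4, 5), s(4, 6), s(5, 6)}) :
    X 2 * X 4 ∈ (symbPower K G 4).colon
        (Ideal.span {(X 0 * X 1) * ((X 5 : MvPolynomial (Fin 7) K) * X 6)}) ∧
      X 2 * X 4 ∉
        (edgeIdeal K G ^ 3).colon
            (Ideal.span {(X 0 * X 1) * ((X 5 : MvPolynomial (Fin 7) K) * X 6)})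
          + Ideal.span
              (X '' {k : Fin 7 |
                X k ∈ (symbPower K G 4).colon
                  (Ideal.span {(X 0 * X 1) * ((X 5 : MvPolynomial (Fin 7) K) * X 6)})}) := by
  obtain ⟨a01, a02, a12, a23, a34, a45, a46, a56⟩ := aux_adj_all G hG
  constructor
  · -- membership in the symbolic power colon
    rw [Ideal.mem_colon_span_singleton]
    unfold symbPower
    rw [Submodule.mem_iInf]
    intro C
    rw [Submodule.mem_iInf]
    intro hC
    have hcov := hC.1
    have h012 : X 0 * X 1 * (X 2 : MvPolynomial (Fin 7) K) ∈ varIdeal K C ^ 2 :=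
      aux_triangle K (hcov a01) (hcov a02) (hcov a12)
    have h456 : X 4 * X 5 * (X 6 : MvPolynomial (Fin 7) K) ∈ varIdeal K C ^ 2 :=
      aux_triangle K (hcov a45) (hcov a46) (hcov a56)
    have he : (X 2 * X 4) * ((X 0 * X 1) * ((X 5 : MvPolynomial (Fin 7) K) * X 6))
        = (X 0 * X 1 * X 2) * (X 4 * X 5 * X 6) := by ring
    have he2 : varIdeal K C ^ 4 = varIdeal K C ^ 2 * varIdeal K C ^ 2 := by ring
    rw [he, he2]
    exact Ideal.mul_mem_mul h012 h456
  · -- non-membership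
    have hmin := aux_minCover G hG
    have hle : symbPower K G 4 ≤ varIdeal K ({1, 2, 4, 6} : Set (Fin 7)) ^ 4 := by
      unfold symbPower
      exact iInf₂_le _ hmin
    have hX0 : {k : Fin 7 |
        X k ∈ (symbPower K G 4).colon
          (Ideal.span {(X 0 * X 1) * ((X 5 : MvPolynomial (Fin 7) K) * X 6)})} = ∅ := by
      ext k
      simp only [Set.mem_setOf_eq, Set.mem_empty_iff_false, iff_false]
      intro hk
      rw [Ideal.mem_colon_span_singleton] at hk
      exact aux_not_mem_pow4 K k (hle hk)
    rw [hX0]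
    rw [Set.image_empty, Ideal.span_empty]
    intro hmem
    rw [Submodule.add_eq_sup, sup_bot_eq, Ideal.mem_colon_span_singleton] at hmem
    have hcube : edgeIdeal K G ^ 3 ≤ Ideal.span (monF K '' (ES + ES + ES)) := by
      have hpow : edgeIdeal K G ^ 3 ≤ Ideal.span (monF K '' ES) ^ 3 := by
        gcongr
        exacts [aux_edgeIdeal_le K G hG]
      refine hpow.trans (le_of_eq ?_)
      rw [pow_succ, pow_succ, pow_one, aux_span_mul, aux_span_mul]
    exact aux_not_mem_cube K (hcube hmem)
end
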